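/- Splicing identity for the functions g_ω: Let ω = (ω_x)_{x∈ℤ} be an environment with R_i < ∞ for every i ∈ ℤ and W_j < ∞ for every j ∈ ℤ. Let ν_0 ≤ 0 < ν_1 be integers and define the spliced environment ω̃ by ω̃_x = ω_{ν_1 + x} for x ≥ 0 and ω̃_x = ω_{ν_0 + x} for x < 0. Then for every x ≤ −1, g_{ω̃}(x) − g_ω(ν_0 + x) = ( Π_{ν_0+x, ν_0−1} + Π_{ν_0+x+1, ν_0−1} ) ( R_{ν_1} − R_{ν_0} ), and consequently Σ_{x ≤ −1} | g_{ω̃}(x) − g_ω(ν_0 + x) | = (1 + 2 W_{ν_0 − 1}) | R_{ν_1} − R_{ν_0} | < ∞. -/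

import Mathlib

open MeasureTheory ProbabilityTheory Filter Set

/-- `ρ_x = (1 − ω_x)/ω_x` for an environment `ω`. -/
noncomputable def rho (env : ℤ → ℝ) (x : ℤ) : ℝ := (1 - env x) / env x

/-- `Π_{i,j} = ρ_i ρ_{i+1} ⋯ ρ_j`, with the convention `Π_{i,j} = 1` when `j < i`. -/
noncomputable def PiProd (env : ℤ → ℝ) (i j : ℤ) : ℝ :=
  ∏ m ∈ Finset.range ((j - i + 1).toNat), rho env (i + m)

/-- `R_i = Σ_{j ≥ i} Π_{i,j}` (as a real number; junk if the series diverges). -/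
noncomputable def Rser (env : ℤ → ℝ) (i : ℤ) : ℝ :=
  ∑' n : ℕ, ∏ m ∈ Finset.range (n + 1), rho env (i + m)

/-- Convergence of the series `R_i`. -/
def RserSummable (env : ℤ → ℝ) (i : ℤ) : Prop :=
  Summable (fun n : ℕ => ∏ m ∈ Finset.range (n + 1), rho env (i + m))

/-- `W_j = Σ_{i ≤ j} Π_{i,j}` (as a real number; junk if the series diverges). -/
noncomputable def Wser (env : ℤ → ℝ) (j : ℤ) : ℝ :=
  ∑' n : ℕ, ∏ m ∈ Finset.range (n + 1), rho env (j - m)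

/-- Convergence of the series `W_j`. -/
def WserSummable (env : ℤ → ℝ) (j : ℤ) : Prop :=
  Summable (fun n : ℕ => ∏ m ∈ Finset.range (n + 1), rho env (j - m))

/-- `g_ω(x) = (1/ω_x)(1 + R_{x+1})`. -/
noncomputable def gfun (env : ℤ → ℝ) (x : ℤ) : ℝ := (1 / env x) * (1 + Rser env (x + 1))

/-- `X` is (in law) a random walk in the environment `env` started at `z`, under the probability
measure `Pr`: it starts at `z` almost surely and its finite-dimensional distributions satisfy the
Markov product formula with transition probabilities `env y` to the right and `1 − env y` to the
left. -/
def IsQuenchedWalk {Ω' : Type*} [MeasurableSpace Ω'] (env : ℤ → ℝ) (Pr : Measure Ω')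
    (X : ℕ → Ω' → ℤ) (z : ℤ) : Prop :=
  Pr {ω | X 0 ω = z} = 1 ∧
  ∀ (n : ℕ) (f : ℕ → ℤ),
    Pr {ω | ∀ i ≤ n + 1, X i ω = f i} =
      Pr {ω | ∀ i ≤ n, X i ω = f i} *
        (if f (n + 1) = f n + 1 then ENNReal.ofReal (env (f n))
         else if f (n + 1) = f n - 1 then ENNReal.ofReal (1 - env (f n)) else 0)

/-!
Below the splicing point nothing changes: `ω̃_x = ω_{ν₀+x}` for `x < 0`. The recursion
`R_i = ρ_i (1 + R_{i+1})` therefore propagates the discrepancy `R̃_0 − R_{ν₀} = R_{ν₁} − R_{ν₀}`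
down to `x + 1` multiplied by `Π_{ν₀+x+1,ν₀−1}`, and `1/ω_x = 1 + ρ_x` turns this into the stated
factor. Both products are positive, so the absolute values are `Π_{j−n,j} + Π_{j−n+1,j}` times
`|R_{ν₁} − R_{ν₀}|` with `j = ν₀ − 1`; the first sum is `W_j`, the second `1 + W_j`.
-/

open Finset

section Environment

variable {env env' : ℤ → ℝ}

lemma rho_pos {x : ℤ} (hx : env x ∈ Ioo (0 : ℝ) 1) : 0 < rho env x :=
  div_pos (by linarith [hx.2]) hx.1

lemma one_div_eq_rho_add_one {x : ℤ} (hx : env x ≠ 0) : 1 / env x = rho env x + 1 := by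
  rw [rho]
  field_simp
  ring

lemma PiProd_pos (hρ : ∀ x, 0 < rho env x) (i j : ℤ) : 0 < PiProd env i j :=
  prod_pos fun _ _ => hρ _

lemma PiProd_of_lt {i j : ℤ} (h : j < i) : PiProd env i j = 1 := by
  rw [PiProd, show (j - i + 1).toNat = 0 by omega, prod_range_zero]

lemma PiProd_eq_rho_mul {i j : ℤ} (h : i ≤ j) :
    PiProd env i j = rho env i * PiProd env (i + 1) j := by
  rw [PiProd, PiProd, show (j - i + 1).toNat = (j - (i + 1) + 1).toNat + 1 by omega,
    prod_range_succ', mul_comm]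
  congr 1
  · simp
  · refine prod_congr rfl fun m _ => ?_
    push_cast
    ring_nf

lemma PiProd_sub_natCast (j : ℤ) (n : ℕ) :
    PiProd env (j - n) j = ∏ m ∈ range (n + 1), rho env (j - m) := by
  rw [PiProd, show (j - (j - n) + 1).toNat = n + 1 by omega, ← prod_range_reflect]
  refine prod_congr rfl fun m hm => ?_
  have := mem_range.mp hm
  congr 1
  omega

lemma RserSummable_congr {a b : ℤ} (h : ∀ m : ℕ, rho env (a + m) = rho env' (b + m)) :
    RserSummable env a ↔ RserSummable env' b := by
  simp only [RserSummable, h]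

lemma Rser_congr {a b : ℤ} (h : ∀ m : ℕ, rho env (a + m) = rho env' (b + m)) :
    Rser env a = Rser env' b := by
  simp only [Rser, h]

lemma hasSum_Rser_of_succ {i : ℤ} (h : RserSummable env (i + 1)) :
    HasSum (fun n : ℕ => ∏ m ∈ range (n + 1), rho env (i + m))
      (rho env i * (1 + Rser env (i + 1))) := by
  have htail : HasSum (fun n : ℕ => ∏ m ∈ range (n + 1 + 1), rho env (i + m))
      (rho env i * Rser env (i + 1)) := by
    refine ((Summable.hasSum h).mul_left (rho env i)).congr_fun fun n => ?_
    rw [prod_range_succ', mul_comm]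
    push_cast
    simp only [add_zero, add_assoc, add_comm (1 : ℤ)]
  have h0 : ∏ m ∈ range (0 + 1), rho env (i + m) = rho env i := by simp
  have := HasSum.zero_add (f := fun n : ℕ => ∏ m ∈ range (n + 1), rho env (i + m)) htail
  rwa [h0, ← mul_one_add] at this

lemma RserSummable.of_succ {i : ℤ} (h : RserSummable env (i + 1)) : RserSummable env i :=
  (hasSum_Rser_of_succ h).summable

lemma Rser_eq_rho_mul {i : ℤ} (h : RserSummable env (i + 1)) :
    Rser env i = rho env i * (1 + Rser env (i + 1)) :=
  (hasSum_Rser_of_succ h).tsum_eq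

lemma RserSummable.of_le {a k : ℤ} (hk : RserSummable env k) (ha : a ≤ k) :
    RserSummable env a := by
  induction a, ha using Int.leInductionDown with
  | base => exact hk
  | pred n _ ih => exact RserSummable.of_succ (by rwa [sub_add_cancel])

lemma Rser_sub_Rser_eq_PiProd_mul {d k : ℤ} (hk : RserSummable env k)
    (hk' : RserSummable env' (k + d)) {a : ℤ} (ha : a ≤ k)
    (hρ : ∀ y, a ≤ y → y < k → rho env y = rho env' (y + d)) :
    Rser env a - Rser env' (a + d) =
      PiProd env' (a + d) (k + d - 1) * (Rser env k - Rser env' (k + d)) := by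
  induction a, ha using Int.leInductionDown with
  | base => rw [PiProd_of_lt (by omega), one_mul]
  | pred n hn ih =>
    have hshift : n - 1 + d + 1 = n + d := by ring
    have hs : RserSummable env (n - 1 + 1) := by rw [sub_add_cancel]; exact hk.of_le hn
    have hs' : RserSummable env' (n - 1 + d + 1) := by rw [hshift]; exact hk'.of_le (by omega)
    rw [Rser_eq_rho_mul hs, Rser_eq_rho_mul hs', PiProd_eq_rho_mul (by omega), sub_add_cancel,
      hshift, hρ (n - 1) le_rfl (by omega), mul_assoc, ← ih fun y h1 h2 => hρ y (by omega) h2]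
    ring

end Environment

lemma gfun_splice_sub_gfun {env envT : ℤ → ℝ} {ν0 ν1 x : ℤ}
    (henvT : ∀ x : ℤ, envT x = if 0 ≤ x then env (ν1 + x) else env (ν0 + x))
    (hR0 : RserSummable env ν0) (hR1 : RserSummable env ν1) (hx : x ≤ -1)
    (hx0 : env (ν0 + x) ≠ 0) :
    gfun envT x - gfun env (ν0 + x) =
      (PiProd env (ν0 + x) (ν0 - 1) + PiProd env (ν0 + x + 1) (ν0 - 1)) *
        (Rser env ν1 - Rser env ν0) := by
  have hright : ∀ m : ℕ, rho envT (0 + m) = rho env (ν1 + m) := by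
    intro m
    simp only [rho, henvT, zero_add, if_pos (Int.natCast_nonneg m)]
  have hleft : ∀ y, x + 1 ≤ y → y < 0 → rho envT y = rho env (y + ν0) := by
    intro y _ hy
    simp only [rho, henvT, if_neg (not_le.mpr hy), add_comm ν0]
  have hR : Rser envT (x + 1) - Rser env (x + 1 + ν0) =
      PiProd env (x + 1 + ν0) (0 + ν0 - 1) * (Rser envT 0 - Rser env (0 + ν0)) :=
    Rser_sub_Rser_eq_PiProd_mul ((RserSummable_congr hright).mpr hR1) (by rwa [zero_add]) (by omega)
      hleft
  have hg : gfun envT x - gfun env (ν0 + x) =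
      1 / env (ν0 + x) * (Rser envT (x + 1) - Rser env (x + 1 + ν0)) := by
    simp only [gfun, henvT, if_neg (show ¬ 0 ≤ x by omega)]
    ring_nf
  rw [hg, hR, Rser_congr hright, one_div_eq_rho_add_one hx0,
    PiProd_eq_rho_mul (show ν0 + x ≤ ν0 - 1 by omega), show x + 1 + ν0 = ν0 + x + 1 by ring,
    zero_add]
  ring

lemma hasSum_PiProd_add_PiProd {env : ℤ → ℝ} {j : ℤ} (hW : WserSummable env j) :
    HasSum (fun n : ℕ => PiProd env (j - n) j + PiProd env (j - n + 1) j)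
      (1 + 2 * Wser env j) := by
  have hw : HasSum (fun n : ℕ => PiProd env (j - n) j) (Wser env j) := by
    simpa only [PiProd_sub_natCast, Wser] using Summable.hasSum hW
  have hu : HasSum (fun n : ℕ => PiProd env (j - n + 1) j) (1 + Wser env j) := by
    have hsucc : ∀ n : ℕ, j - ((n + 1 : ℕ) : ℤ) + 1 = j - n := fun n => by push_cast; ring
    convert HasSum.zero_add (f := fun n : ℕ => PiProd env (j - n + 1) j)
      (by simpa only [hsucc] using hw) using 1
    rw [Nat.cast_zero, sub_zero, PiProd_of_lt (by omega)]
  convert hw.add hu using 1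
  ring

theorem splicing_identity_g_general
    (env : ℤ → ℝ) (hval : ∀ x : ℤ, env x ∈ Set.Ioo (0:ℝ) 1)
    (hR : ∀ i : ℤ, RserSummable env i)
    (hW : ∀ j : ℤ, WserSummable env j)
    (ν0 ν1 : ℤ)
    (envT : ℤ → ℝ)
    (henvT : ∀ x : ℤ, envT x = if 0 ≤ x then env (ν1 + x) else env (ν0 + x)) :
    (∀ x : ℤ, x ≤ -1 →
      gfun envT x - gfun env (ν0 + x) =
        (PiProd env (ν0 + x) (ν0 - 1) + PiProd env (ν0 + x + 1) (ν0 - 1)) *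
          (Rser env ν1 - Rser env ν0)) ∧
    Summable (fun n : ℕ => |gfun envT (-1 - n) - gfun env (ν0 + (-1 - n))|) ∧
    (∑' n : ℕ, |gfun envT (-1 - n) - gfun env (ν0 + (-1 - n))|) =
      (1 + 2 * Wser env (ν0 - 1)) * |Rser env ν1 - Rser env ν0| := by
  have hdiff := fun x (hx : x ≤ -1) =>
    gfun_splice_sub_gfun henvT (hR ν0) (hR ν1) hx (hval _).1.ne'
  have hPi := PiProd_pos fun x => rho_pos (hval x)
  have hsum : HasSum (fun n : ℕ => |gfun envT (-1 - n) - gfun env (ν0 + (-1 - n))|)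
      ((1 + 2 * Wser env (ν0 - 1)) * |Rser env ν1 - Rser env ν0|) := by
    refine ((hasSum_PiProd_add_PiProd (hW (ν0 - 1))).mul_right _).congr_fun fun n => ?_
    rw [hdiff _ (by omega), abs_mul, abs_of_pos (add_pos (hPi _ _) (hPi _ _)),
      show ν0 + (-1 - n) = ν0 - 1 - n by ring]
  exact ⟨hdiff, hsum.summable, hsum.tsum_eq⟩

/-- Splicing identity for the functions `g_ω`: if `ω` is an environment with all
series `R_i` and `W_j` convergent, `ν₀ ≤ 0 < ν₁`, and `ω̃` is obtained by removing the block
`[ν₀, ν₁)` of `ω` (i.e. `ω̃_x = ω_{ν₁+x}` for `x ≥ 0` and `ω̃_x = ω_{ν₀+x}` for `x < 0`), then for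
every `x ≤ −1`,
`g_{ω̃}(x) − g_ω(ν₀+x) = (Π_{ν₀+x,ν₀−1} + Π_{ν₀+x+1,ν₀−1})(R_{ν₁} − R_{ν₀})`,
and consequently `Σ_{x ≤ −1} |g_{ω̃}(x) − g_ω(ν₀+x)| = (1 + 2W_{ν₀−1}) |R_{ν₁} − R_{ν₀}| < ∞`. -/
theorem splicing_identity_g
    (env : ℤ → ℝ) (hval : ∀ x : ℤ, env x ∈ Set.Ioo (0:ℝ) 1)
    (hR : ∀ i : ℤ, RserSummable env i)
    (hW : ∀ j : ℤ, WserSummable env j)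
    (ν0 ν1 : ℤ) (hν0 : ν0 ≤ 0) (hν1 : 0 < ν1)
    (envT : ℤ → ℝ)
    (henvT : ∀ x : ℤ, envT x = if 0 ≤ x then env (ν1 + x) else env (ν0 + x)) :
    (∀ x : ℤ, x ≤ -1 →
      gfun envT x - gfun env (ν0 + x) =
        (PiProd env (ν0 + x) (ν0 - 1) + PiProd env (ν0 + x + 1) (ν0 - 1)) *
          (Rser env ν1 - Rser env ν0)) ∧
    Summable (fun n : ℕ => |gfun envT (-1 - n) - gfun env (ν0 + (-1 - n))|) ∧
    (∑' n : ℕ, |gfun envT (-1 - n) - gfun env (ν0 + (-1 - n))|) =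
      (1 + 2 * Wser env (ν0 - 1)) * |Rser env ν1 - Rser env ν0| :=
  splicing_identity_g_general env hval hR hW ν0 ν1 envT henvT
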